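/- Let p be a real number with 0 < p < 1/2. With accurate grades (q = 1): U_s(p,1) = 2·p = 2·U_r(p,1), FPR_s(p,1) = p/(1-p), FNR_s(p,1) = 0, and FPR_r(p,1) = FNR_r(p,1) = 0; that is, the optimal signaling scheme doubles the school's expected utility, raises its false positive rate from 0 to p/(1-p), and keeps its false negative rate at 0. -/

import Mathlib

/-- The revealing school's expected utility. -/
noncomputable def U_r (p q : ℝ) : ℝ := p * q + (1 - p) * (1 - q)

/-- The strategic school's expected utility. -/
noncomputable def U_s (p q : ℝ) : ℝ := 1 + (p + q - 2 * p * q) * (2 * p - 1) / (q - p)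

/-- The revealing school's false positive rate. -/
noncomputable def FPR_r (p q : ℝ) : ℝ := 1 - q

/-- The revealing school's false negative rate. -/
noncomputable def FNR_r (p q : ℝ) : ℝ := 1 - q

/-- The strategic school's false positive rate. -/
noncomputable def FPR_s (p q : ℝ) : ℝ := 1 - q + q * (p + q - 1) / (q - p)

/-- The strategic school's false negative rate. -/
noncomputable def FNR_s (p q : ℝ) : ℝ := (1 - q) * (1 - 2 * p) / (q - p)

theorem U_r_one (p : ℝ) : U_r p 1 = p := by
  simp [U_r]

theorem U_s_one {p : ℝ} (hp : p ≠ 1) : U_s p 1 = 2 * p := by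
  have h : 1 - p ≠ 0 := sub_ne_zero.mpr hp.symm
  unfold U_s
  field_simp
  ring

theorem FPR_s_one {p : ℝ} (hp : p ≠ 1) : FPR_s p 1 = p / (1 - p) := by
  have h : 1 - p ≠ 0 := sub_ne_zero.mpr hp.symm
  unfold FPR_s
  field_simp
  ring

theorem FNR_s_one (p : ℝ) : FNR_s p 1 = 0 := by
  simp [FNR_s]

theorem accurate_grades_signaling_impact_general (p : ℝ) (hp : p < 1/2) :
    U_s p 1 = 2 * p ∧ U_s p 1 = 2 * U_r p 1 ∧
    FPR_s p 1 = p / (1 - p) ∧ FNR_s p 1 = 0 ∧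
    FPR_r p 1 = 0 ∧ FNR_r p 1 = 0 := by
  have hp1 : p ≠ 1 := by linarith
  exact ⟨U_s_one hp1, by rw [U_s_one hp1, U_r_one], FPR_s_one hp1, FNR_s_one p,
    sub_self 1, sub_self 1⟩

/-- With accurate grades (q = 1): strategic signaling doubles the school's
utility, raises the FPR from 0 to p/(1-p) and keeps the FNR at 0. -/
theorem accurate_grades_signaling_impact (p : ℝ) (hp0 : 0 < p) (hp : p < 1/2) :
    U_s p 1 = 2 * p ∧ U_s p 1 = 2 * U_r p 1 ∧
    FPR_s p 1 = p / (1 - p) ∧ FNR_s p 1 = 0 ∧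
    FPR_r p 1 = 0 ∧ FNR_r p 1 = 0 :=
  accurate_grades_signaling_impact_general p hp
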